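/- For the cylindrical pairing Par(A, B) of subsets A, B ⊆ ℤ_n (particles of B paired weakly to the right onto A), the number of matched pairs equals |A| + |B| minus the number of unpaired brackets, and the σ_1 exchange of unmatched particles produces sets A', B' with |A'| = |B| and |B'| = |A| (cardinalities are swapped), while A ∩ B ⊆ A' ∩ B' holds for the paired positions: any site in both A and B remains matched and in both rows after σ_1. -/

import Mathlib

/-- Linear bracket-matching pass.  Tokens are `(site, isOpen)`.  The second argument is the
stack of currently unmatched open brackets (most recent first), the third accumulates the
linearly unmatched closed brackets (most recent first). -/
def pairProcess {α : Type} : List (α × Bool) → List α → List α → List α × List α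
  | [], opens, closes => (opens, closes)
  | (a, true) :: ts, opens, closes => pairProcess ts (a :: opens) closes
  | (a, false) :: ts, [], closes => pairProcess ts [] (a :: closes)
  | (_, false) :: ts, _ :: opens, closes => pairProcess ts opens closes

/-- The token list of `Par(A,B)`: scanning sites `j = 1, …, n` in order, record an open
bracket for `j ∈ B` (the row above) and then a closed bracket for `j ∈ A` (the row below). -/
def parTokens {n : ℕ} (A B : Finset (Fin n)) : List (Fin n × Bool) :=
  (List.finRange n).flatMap
    (fun j => (if j ∈ B then [(j, true)] else []) ++ (if j ∈ A then [(j, false)] else []))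

/-- Result of the linear pass on `Par(A,B)`. -/
def parRes {n : ℕ} (A B : Finset (Fin n)) : List (Fin n) × List (Fin n) :=
  pairProcess (parTokens A B) [] []

/-- The set of cylindrically unpaired particles of `B` (open brackets) in `Par(A,B)`:
after the linear pass, the cyclic rule additionally matches `min` many remaining opens
and closes, leaving the earliest surplus opens unmatched. -/
def unmatchedOpen {n : ℕ} (A B : Finset (Fin n)) : Finset (Fin n) :=
  ((parRes A B).1.drop (parRes A B).2.length).toFinset

/-- The set of cylindrically unpaired particles of `A` (closed brackets) in `Par(A,B)`. -/
def unmatchedClose {n : ℕ} (A B : Finset (Fin n)) : Finset (Fin n) :=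
  ((parRes A B).2.take ((parRes A B).2.length - (parRes A B).1.length)).toFinset

/-- The row-swapping involution on a pair of rows `(A, B)` (`A` below, `B` above):
all cylindrically unmatched entries of `Par(A,B)` are exchanged between the two rows. -/
def sigmaPair {n : ℕ} (A B : Finset (Fin n)) : Finset (Fin n) × Finset (Fin n) :=
  ((A \ unmatchedClose A B) ∪ unmatchedOpen A B,
   (B \ unmatchedOpen A B) ∪ unmatchedClose A B)

/-- The involution `σ_i` acting on rows `i` and `i+1` of a multiline queue. -/
def sigmaRow {n : ℕ} (i : ℕ) (Q : ℕ → Finset (Fin n)) : ℕ → Finset (Fin n) :=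
  fun j =>
    if j = i then (sigmaPair (Q i) (Q (i + 1))).1
    else if j = i + 1 then (sigmaPair (Q i) (Q (i + 1))).2
    else Q j

/-! The linear pass leaves a stack `O` of unmatched opens and a list `C` of unmatched closes
with `|O| + |A| = |C| + |B|`, since each step either pushes a bracket or cancels one of each
kind. The cylindrical rule leaves `|O| - |C|` of the opens and `|C| - |O|` of the closes unmatched,
so `|unmatchedOpen| + |A| = |unmatchedClose| + |B|`. A site of `A ∩ B` emits `()`, which
cancels at once, so the pass on `(A, B)` coincides with the pass on `(A \ B, B \ A)`: unmatched
opens lie in `B \ A` and unmatched closes in `A \ B`, and the rest is counting. -/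

open scoped List

section PairProcess

variable {α : Type}

theorem List.Subperm.nodup {l₁ l₂ : List α} (h : l₁ <+~ l₂) (hl₂ : l₂.Nodup) : l₁.Nodup :=
  let ⟨_, hperm, hsub⟩ := h
  hperm.nodup_iff.1 (hl₂.sublist hsub)

def openSites (ts : List (α × Bool)) : List α := (ts.filter (·.2)).map Prod.fst

def closeSites (ts : List (α × Bool)) : List α := (ts.filter (! ·.2)).map Prod.fst

theorem pairProcess_length_add : ∀ (ts : List (α × Bool)) (o c : List α),
    (pairProcess ts o c).1.length + c.length + (closeSites ts).length
      = (pairProcess ts o c).2.length + o.length + (openSites ts).length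
  | [], o, c => by simp [pairProcess, openSites, closeSites]; omega
  | (a, true) :: ts, o, c => by
      have := pairProcess_length_add ts (a :: o) c
      simp_all [pairProcess, openSites, closeSites]; omega
  | (a, false) :: ts, [], c => by
      have := pairProcess_length_add ts [] (a :: c)
      simp_all [pairProcess, openSites, closeSites]; omega
  | (_, false) :: ts, _ :: o, c => by
      have := pairProcess_length_add ts o c
      simp_all [pairProcess, openSites, closeSites]; omega

theorem pairProcess_fst_subperm : ∀ (ts : List (α × Bool)) (o c : List α),
    (pairProcess ts o c).1 <+~ o ++ openSites ts
  | [], o, c => by simpa [pairProcess, openSites] using List.Subperm.refl o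
  | (a, true) :: ts, o, c => by
      simpa [pairProcess, openSites] using
        (pairProcess_fst_subperm ts (a :: o) c).trans List.perm_middle.symm.subperm
  | (a, false) :: ts, [], c => by
      simpa [pairProcess, openSites] using pairProcess_fst_subperm ts [] (a :: c)
  | (_, false) :: ts, y :: o, c => by
      simpa [pairProcess, openSites] using
        (pairProcess_fst_subperm ts o c).trans (List.sublist_cons_self y _).subperm

theorem pairProcess_snd_subperm : ∀ (ts : List (α × Bool)) (o c : List α),
    (pairProcess ts o c).2 <+~ c ++ closeSites ts
  | [], o, c => by simpa [pairProcess, closeSites] using List.Subperm.refl c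
  | (a, true) :: ts, o, c => by
      simpa [pairProcess, closeSites] using pairProcess_snd_subperm ts (a :: o) c
  | (a, false) :: ts, [], c => by
      simpa [pairProcess, closeSites] using
        (pairProcess_snd_subperm ts [] (a :: c)).trans List.perm_middle.symm.subperm
  | (a, false) :: ts, _ :: o, c => by
      simpa [pairProcess, closeSites] using
        (pairProcess_snd_subperm ts o c).trans ((List.sublist_cons_self a _).append_left c).subperm

theorem pairProcess_append : ∀ (l₁ l₂ : List (α × Bool)) (o c : List α),
    pairProcess (l₁ ++ l₂) o c = pairProcess l₂ (pairProcess l₁ o c).1 (pairProcess l₁ o c).2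
  | [], _, _, _ => rfl
  | (a, true) :: l₁, l₂, o, c => pairProcess_append l₁ l₂ (a :: o) c
  | (a, false) :: l₁, l₂, [], c => pairProcess_append l₁ l₂ [] (a :: c)
  | (_, false) :: l₁, l₂, _ :: o, c => pairProcess_append l₁ l₂ o c

end PairProcess

section Par

variable {n : ℕ} (A B : Finset (Fin n))

def siteTokens (j : Fin n) : List (Fin n × Bool) :=
  (if j ∈ B then [(j, true)] else []) ++ (if j ∈ A then [(j, false)] else [])

theorem parTokens_eq_flatMap_siteTokens :
    parTokens A B = (List.finRange n).flatMap (siteTokens A B) := rfl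

theorem openSites_parTokens : openSites (parTokens A B) = (List.finRange n).filter (· ∈ B) := by
  rw [parTokens_eq_flatMap_siteTokens]
  induction List.finRange n with
  | nil => rfl
  | cons j L ih =>
    by_cases hA : j ∈ A <;> by_cases hB : j ∈ B <;>
      simp_all [openSites, siteTokens]

theorem closeSites_parTokens : closeSites (parTokens A B) = (List.finRange n).filter (· ∈ A) := by
  rw [parTokens_eq_flatMap_siteTokens]
  induction List.finRange n with
  | nil => rfl
  | cons j L ih =>
    by_cases hA : j ∈ A <;> by_cases hB : j ∈ B <;>
      simp_all [closeSites, siteTokens]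

theorem length_filter_finRange_mem (S : Finset (Fin n)) :
    ((List.finRange n).filter (· ∈ S)).length = S.card := by
  rw [← List.toFinset_card_of_nodup ((List.nodup_finRange n).filter _)]
  congr
  ext x
  simp

theorem pairProcess_siteTokens_sdiff (j : Fin n) (o c : List (Fin n)) :
    pairProcess (siteTokens A B j) o c = pairProcess (siteTokens (A \ B) (B \ A) j) o c := by
  by_cases hA : j ∈ A <;> by_cases hB : j ∈ B <;> simp [siteTokens, hA, hB, pairProcess]

theorem parRes_sdiff : parRes A B = parRes (A \ B) (B \ A) := by
  suffices ∀ (L : List (Fin n)) (o c : List (Fin n)), pairProcess (L.flatMap (siteTokens A B)) o c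
      = pairProcess (L.flatMap (siteTokens (A \ B) (B \ A))) o c from this _ [] []
  intro L
  induction L with
  | nil => intro o c; rfl
  | cons j L ih =>
    intro o c
    rw [List.flatMap_cons, List.flatMap_cons, pairProcess_append, pairProcess_append,
      pairProcess_siteTokens_sdiff A B, ih]

theorem parRes_length : (parRes A B).1.length + A.card = (parRes A B).2.length + B.card := by
  simpa [parRes, openSites_parTokens, closeSites_parTokens, length_filter_finRange_mem] using
    pairProcess_length_add (parTokens A B) [] []

theorem parRes_fst_subperm : (parRes A B).1 <+~ (List.finRange n).filter (· ∈ B) := by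
  simpa [parRes, openSites_parTokens] using pairProcess_fst_subperm (parTokens A B) [] []

theorem parRes_snd_subperm : (parRes A B).2 <+~ (List.finRange n).filter (· ∈ A) := by
  simpa [parRes, closeSites_parTokens] using pairProcess_snd_subperm (parTokens A B) [] []

theorem nodup_parRes_fst : (parRes A B).1.Nodup :=
  (parRes_fst_subperm A B).nodup ((List.nodup_finRange n).filter _)

theorem nodup_parRes_snd : (parRes A B).2.Nodup :=
  (parRes_snd_subperm A B).nodup ((List.nodup_finRange n).filter _)

theorem mem_sdiff_of_mem_parRes_fst {x : Fin n} (hx : x ∈ (parRes A B).1) : x ∈ B \ A := by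
  rw [parRes_sdiff] at hx
  simpa using (parRes_fst_subperm _ _).subset hx

theorem mem_sdiff_of_mem_parRes_snd {x : Fin n} (hx : x ∈ (parRes A B).2) : x ∈ A \ B := by
  rw [parRes_sdiff] at hx
  simpa using (parRes_snd_subperm _ _).subset hx

theorem unmatchedOpen_subset_sdiff : unmatchedOpen A B ⊆ B \ A := fun _ hx =>
  mem_sdiff_of_mem_parRes_fst A B (List.mem_of_mem_drop (List.mem_toFinset.1 hx))

theorem unmatchedClose_subset_sdiff : unmatchedClose A B ⊆ A \ B := fun _ hx =>
  mem_sdiff_of_mem_parRes_snd A B (List.mem_of_mem_take (List.mem_toFinset.1 hx))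

theorem card_unmatchedOpen_add_card :
    (unmatchedOpen A B).card + A.card = (unmatchedClose A B).card + B.card := by
  rw [unmatchedOpen, unmatchedClose,
    List.toFinset_card_of_nodup ((List.drop_sublist _ _).nodup (nodup_parRes_fst A B)),
    List.toFinset_card_of_nodup ((List.take_sublist _ _).nodup (nodup_parRes_snd A B)),
    List.length_drop, List.length_take]
  have := parRes_length A B
  omega

end Par

theorem card_sdiff_union_of_card_add_eq {α : Type*} [DecidableEq α] {A B U V : Finset α}
    (hU : U ⊆ B \ A) (hV : V ⊆ A \ B) (h : U.card + A.card = V.card + B.card) :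
    (A \ V ∪ U).card = B.card := by
  have hVA : V ⊆ A := hV.trans Finset.sdiff_subset
  have hdisj : Disjoint (A \ V) U :=
    Finset.disjoint_of_subset_left Finset.sdiff_subset
      (Finset.disjoint_of_subset_right hU Finset.disjoint_sdiff)
  rw [Finset.card_union_of_disjoint hdisj, Finset.card_sdiff_of_subset hVA]
  have := Finset.card_le_card hVA
  omega

/-- for the cylindrical pairing `Par(A,B)` of `A, B ⊆ ℤ_n`, the number of
matched brackets equals `|A| + |B|` minus the number of unpaired brackets; the exchange
`σ_1` of unmatched particles produces rows `A', B'` with `|A'| = |B|` and `|B'| = |A|`;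
and every site lying in both `A` and `B` self-pairs and stays in both rows:
`A ∩ B ⊆ A' ∩ B'`. -/
theorem sigmaPair_card_swap (n : ℕ) (A B : Finset (Fin n)) :
    (A \ unmatchedClose A B).card + (B \ unmatchedOpen A B).card
        = (A.card + B.card) - ((unmatchedClose A B).card + (unmatchedOpen A B).card) ∧
    (sigmaPair A B).1.card = B.card ∧
    (sigmaPair A B).2.card = A.card ∧
    A ∩ B ⊆ (sigmaPair A B).1 ∩ (sigmaPair A B).2 := by
  have hU := unmatchedOpen_subset_sdiff A B
  have hV := unmatchedClose_subset_sdiff A B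
  have hbal := card_unmatchedOpen_add_card A B
  refine ⟨?_, card_sdiff_union_of_card_add_eq hU hV hbal,
    card_sdiff_union_of_card_add_eq hV hU hbal.symm, ?_⟩
  · have hVA : unmatchedClose A B ⊆ A := hV.trans Finset.sdiff_subset
    have hUB : unmatchedOpen A B ⊆ B := hU.trans Finset.sdiff_subset
    rw [Finset.card_sdiff_of_subset hVA, Finset.card_sdiff_of_subset hUB]
    have := Finset.card_le_card hVA
    have := Finset.card_le_card hUB
    omega
  · intro x hx
    rw [Finset.mem_inter] at hx
    have hxV : x ∉ unmatchedClose A B := fun h => (Finset.mem_sdiff.1 (hV h)).2 hx.2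
    have hxU : x ∉ unmatchedOpen A B := fun h => (Finset.mem_sdiff.1 (hU h)).2 hx.1
    simp [sigmaPair, hx, hxU, hxV]
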